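/- arXiv:2107.09770 — 6 statements merged into one kernel-verified Lean document; each statement's English description precedes it below -/
import Mathlib

section
/- Let (L, R, E) be a bipartite graph with costs c : L × R → ℝ, let ŷ be an arbitrary dual assignment and let y* be any feasible dual solution. Define F = {(i,j) ∈ E : ŷ_L(i) + ŷ_R(j) > c(i,j)} and r(i,j) = ŷ_L(i) + ŷ_R(j) − c(i,j) for (i,j) ∈ F. Then the assignment δ defined by δ_L(i) = max(ŷ_L(i) − y*_L(i), 0) and δ_R(j) = max(ŷ_R(j) − y*_R(j), 0) is nonnegative, satisfies δ_L(i) + δ_R(j) ≥ r(i,j) for every (i,j) ∈ F, and has total value Σ_{i∈L} δ_L(i) + Σ_{j∈R} δ_R(j) ≤ Σ_{i∈L} |ŷ_L(i) − y*_L(i)| + Σ_{j∈R} |ŷ_R(j) − y*_R(j)| = ‖ŷ − y*‖₁. Consequently the optimum of the distance-to-feasibility covering LP (minimize Σ_v δ_v subject to δ ≥ 0 and δ_L(i) + δ_R(j) ≥ r(i,j) for (i,j) ∈ F) is at most ‖ŷ − y*‖₁. -/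
/-!
If `y*` is feasible on an edge `(i, j)`, the violation of `ŷ` there is
`(ŷ_L(i) − y*_L(i)) + (ŷ_R(j) − y*_R(j)) − (c(i,j) − y*_L(i) − y*_R(j))`, which is at most the sum of
the positive parts of the two coordinate differences; and a positive part never exceeds the
absolute value.
-/

section LinearOrder

variable {α : Type*} [AddCommGroup α] [LinearOrder α] [IsOrderedAddMonoid α]

lemma max_zero_le_abs (a : α) : max a 0 ≤ |a| :=
  max_le (le_abs_self a) (abs_nonneg a)

lemma add_sub_le_max_sub_zero_add_max_sub_zero {a b a' b' c : α} (h : a' + b' ≤ c) :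
    a + b - c ≤ max (a - a') 0 + max (b - b') 0 := by
  have ha : a - a' ≤ max (a - a') 0 := le_max_left _ _
  have hb : b - b' ≤ max (b - b') 0 := le_max_left _ _
  calc a + b - c ≤ a + b - (a' + b') := sub_le_sub_left h _
    _ = (a - a') + (b - b') := by abel
    _ ≤ max (a - a') 0 + max (b - b') 0 := add_le_add ha hb

end LinearOrder

/-- The perturbation `δ = max(ŷ − y*, 0)` is nonnegative, covers the
infeasibility amounts on all violated edges, and has total value at most
`‖ŷ − y*‖₁`; hence the distance-to-feasibility covering LP has optimum at most
`‖ŷ − y*‖₁`. -/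
theorem truncated_difference_covers
    {L R : Type*} [Fintype L] [Fintype R]
    (E : Set (L × R)) (c : L × R → ℝ)
    (yL : L → ℝ) (yR : R → ℝ)           -- the prediction ŷ
    (ysL : L → ℝ) (ysR : R → ℝ)         -- a feasible dual y*
    (hfeas : ∀ e ∈ E, ysL e.1 + ysR e.2 ≤ c e) :
    (∀ i, 0 ≤ max (yL i - ysL i) 0) ∧ (∀ j, 0 ≤ max (yR j - ysR j) 0) ∧
    (∀ e ∈ E, yL e.1 + yR e.2 > c e →
      max (yL e.1 - ysL e.1) 0 + max (yR e.2 - ysR e.2) 0 ≥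
        yL e.1 + yR e.2 - c e) ∧
    (∑ i, max (yL i - ysL i) 0 + ∑ j, max (yR j - ysR j) 0 ≤
      ∑ i, |yL i - ysL i| + ∑ j, |yR j - ysR j|) ∧
    (∃ δL : L → ℝ, ∃ δR : R → ℝ,
      (∀ i, 0 ≤ δL i) ∧ (∀ j, 0 ≤ δR j) ∧
      (∀ e ∈ E, yL e.1 + yR e.2 > c e →
        δL e.1 + δR e.2 ≥ yL e.1 + yR e.2 - c e) ∧
      ∑ i, δL i + ∑ j, δR j ≤ ∑ i, |yL i - ysL i| + ∑ j, |yR j - ysR j|) := by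
  have nonnegL : ∀ i, 0 ≤ max (yL i - ysL i) 0 := fun i => le_max_right _ _
  have nonnegR : ∀ j, 0 ≤ max (yR j - ysR j) 0 := fun j => le_max_right _ _
  have cover : ∀ e ∈ E, yL e.1 + yR e.2 > c e →
      max (yL e.1 - ysL e.1) 0 + max (yR e.2 - ysR e.2) 0 ≥ yL e.1 + yR e.2 - c e :=
    fun e he _ => add_sub_le_max_sub_zero_add_max_sub_zero (hfeas e he)
  have total : ∑ i, max (yL i - ysL i) 0 + ∑ j, max (yR j - ysR j) 0 ≤
      ∑ i, |yL i - ysL i| + ∑ j, |yR j - ysR j| :=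
    add_le_add (Finset.sum_le_sum fun i _ => max_zero_le_abs _)
      (Finset.sum_le_sum fun j _ => max_zero_le_abs _)
  exact ⟨nonnegL, nonnegR, cover, total, _, _, nonnegL, nonnegR, cover, total⟩
end

section
/- Let (L, R, E) be a bipartite graph with costs c : L × R → ℝ, let ŷ be an arbitrary dual assignment, and let y* be a feasible dual solution. Define F = {(i,j) ∈ E : ŷ_L(i) + ŷ_R(j) > c(i,j)} and r(i,j) = ŷ_L(i) + ŷ_R(j) − c(i,j) for (i,j) ∈ F. Suppose δ ≥ 0 satisfies δ_L(i) + δ_R(j) ≥ r(i,j) for every (i,j) ∈ F, and suppose δ is a 2-approximation to the covering LP, i.e. Σ_v δ_v ≤ 2 · Σ_v δ'_v for every nonnegative δ' satisfying δ'_L(i) + δ'_R(j) ≥ r(i,j) for all (i,j) ∈ F. Then ŷ' := ŷ − δ is a feasible dual, ‖ŷ' − ŷ‖₁ ≤ 2‖ŷ − y*‖₁, and ‖ŷ' − y*‖₁ ≤ 3‖ŷ − y*‖₁. -/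
/-!
Since `y*` is feasible, the violation `ŷ_L(i) + ŷ_R(j) − c(i,j)` of every edge is at most
`|ŷ_L(i) − y*_L(i)| + |ŷ_R(j) − y*_R(j)|`, so `|ŷ − y*|` is itself a cover. The 2-approximation
property therefore gives `‖δ‖₁ ≤ 2‖ŷ − y*‖₁`, which is the second bound because `δ ≥ 0`, and
the triangle inequality turns it into the third.
-/

open Finset

lemma sub_add_sub_le_of_cover {a b c da db : ℝ} (hda : 0 ≤ da) (hdb : 0 ≤ db)
    (hcover : a + b > c → da + db ≥ a + b - c) : (a - da) + (b - db) ≤ c := by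
  by_cases hviol : a + b > c
  · linarith [hcover hviol]
  · linarith

lemma add_sub_le_abs_sub_add_abs_sub {a b a' b' c : ℝ} (hfeas : a' + b' ≤ c) :
    a + b - c ≤ |a - a'| + |b - b'| := by
  linarith [le_abs_self (a - a'), le_abs_self (b - b')]

section L1

variable {ι : Type*} [Fintype ι]

lemma sum_abs_sub_sub_self {d : ι → ℝ} (hd : ∀ i, 0 ≤ d i) (f : ι → ℝ) :
    ∑ i, |(f i - d i) - f i| = ∑ i, d i :=
  sum_congr rfl fun i _ => by rw [sub_sub_cancel_left, abs_neg, abs_of_nonneg (hd i)]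

lemma sum_abs_sub_le_sum_abs_sub_add (f g h : ι → ℝ) :
    ∑ i, |f i - h i| ≤ ∑ i, |f i - g i| + ∑ i, |g i - h i| := by
  rw [← sum_add_distrib]
  exact sum_le_sum fun i _ => abs_sub_le (f i) (g i) (h i)

end L1

/-- If `δ ≥ 0` covers the infeasibility amounts and is a 2-approximation to the
covering LP, then `ŷ' = ŷ − δ` is feasible, `‖ŷ' − ŷ‖₁ ≤ 2‖ŷ − y*‖₁`, and
`‖ŷ' − y*‖₁ ≤ 3‖ŷ − y*‖₁`. -/
theorem two_approx_projection_bounds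
    {L R : Type*} [Fintype L] [Fintype R]
    (E : Set (L × R)) (c : L × R → ℝ)
    (yL : L → ℝ) (yR : R → ℝ)           -- the prediction ŷ
    (ysL : L → ℝ) (ysR : R → ℝ)         -- a feasible dual y*
    (hfeas : ∀ e ∈ E, ysL e.1 + ysR e.2 ≤ c e)
    (δL : L → ℝ) (δR : R → ℝ)
    (hδL : ∀ i, 0 ≤ δL i) (hδR : ∀ j, 0 ≤ δR j)
    (hcover : ∀ e ∈ E, yL e.1 + yR e.2 > c e →
      δL e.1 + δR e.2 ≥ yL e.1 + yR e.2 - c e)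
    (happrox : ∀ δL' : L → ℝ, ∀ δR' : R → ℝ,
      (∀ i, 0 ≤ δL' i) → (∀ j, 0 ≤ δR' j) →
      (∀ e ∈ E, yL e.1 + yR e.2 > c e →
        δL' e.1 + δR' e.2 ≥ yL e.1 + yR e.2 - c e) →
      ∑ i, δL i + ∑ j, δR j ≤ 2 * (∑ i, δL' i + ∑ j, δR' j)) :
    (∀ e ∈ E, (yL e.1 - δL e.1) + (yR e.2 - δR e.2) ≤ c e) ∧
    (∑ i, |(yL i - δL i) - yL i| + ∑ j, |(yR j - δR j) - yR j| ≤
      2 * (∑ i, |yL i - ysL i| + ∑ j, |yR j - ysR j|)) ∧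
    (∑ i, |(yL i - δL i) - ysL i| + ∑ j, |(yR j - δR j) - ysR j| ≤
      3 * (∑ i, |yL i - ysL i| + ∑ j, |yR j - ysR j|)) := by
  have hδ_le : ∑ i, δL i + ∑ j, δR j ≤ 2 * (∑ i, |yL i - ysL i| + ∑ j, |yR j - ysR j|) :=
    happrox _ _ (fun _ => abs_nonneg _) (fun _ => abs_nonneg _)
      fun e he _ => add_sub_le_abs_sub_add_abs_sub (hfeas e he)
  refine ⟨fun e he => sub_add_sub_le_of_cover (hδL e.1) (hδR e.2) (hcover e he), ?_, ?_⟩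
  · rwa [sum_abs_sub_sub_self hδL, sum_abs_sub_sub_self hδR]
  · calc ∑ i, |(yL i - δL i) - ysL i| + ∑ j, |(yR j - δR j) - ysR j|
        ≤ (∑ i, |(yL i - δL i) - yL i| + ∑ i, |yL i - ysL i|)
          + (∑ j, |(yR j - δR j) - yR j| + ∑ j, |yR j - ysR j|) :=
          add_le_add (sum_abs_sub_le_sum_abs_sub_add _ _ _)
            (sum_abs_sub_le_sum_abs_sub_add _ _ _)
      _ = (∑ i, δL i + ∑ j, δR j) + (∑ i, |yL i - ysL i| + ∑ j, |yR j - ysR j|) := by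
          rw [sum_abs_sub_sub_self hδL, sum_abs_sub_sub_self hδR]; ring
      _ ≤ 3 * (∑ i, |yL i - ysL i| + ∑ j, |yR j - ysR j|) := by linarith
end

section
/- Let x^1, …, x^k ∈ ℝ^n be a family of points that is ℓ1-pseudo-shattered, i.e. there exist real numbers r_1, …, r_k such that for every subset S ⊆ {1,…,k} there exists y ∈ ℝ^n with (‖y − x^i‖₁ ≤ r_i if and only if i ∈ S) for all i. Then 2^k ≤ (k+1)^n · Σ_{i=0}^{n} binom(k, i). -/
/-!
On each cell of the grid cut out by the coordinate hyperplanes `y_j = x^i_j`, every function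
`y ↦ ‖y - x^i‖₁ - r_i` is affine. There are at most `(k+1)^n` cells, recorded by how many of
the `x^i_j` lie below `y_j` in each coordinate. Sublevel patterns of `k` affine functions on
`ℝⁿ` have VC dimension at most `n` (a linear dependence among `n + 1` linear parts gives a
constant combination, which the patterns `{g > 0}` and `{g < 0}` would make unequal), so by
Sauer–Shelah each cell realises at most `∑_{i ≤ n} C(k, i)` of the `2^k` subsets.
-/

open Finset

lemma mul_lt_mul_of_le_zero_iff {R : Type*} [CommRing R] [LinearOrder R] [IsStrictOrderedRing R]
    {g a b : R} (ha : a ≤ 0 ↔ 0 < g) (hb : b ≤ 0 ↔ g < 0) (hg : g ≠ 0) : g * a < g * b := by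
  rcases hg.lt_or_gt with hneg | hpos
  · have : 0 < a := not_le.1 fun h => (ha.1 h).not_gt hneg
    nlinarith [hb.2 hneg]
  · have : 0 < b := not_le.1 fun h => (hb.1 h).not_gt hpos
    nlinarith [ha.2 hpos]

section SublevelPatterns

variable {R ι X : Type*} [DecidableEq ι] {f : ι → X → R} {𝒜 : Finset (Finset ι)} {A : Finset ι}

lemma exists_forall_le_zero_iff_of_shatters [Zero R] [LE R]
    (h𝒜 : ∀ S ∈ 𝒜, ∃ z, ∀ i, f i z ≤ 0 ↔ i ∈ S) (hA : 𝒜.Shatters A)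
    (p : ι → Prop) [DecidablePred p] : ∃ z, ∀ i ∈ A, (f i z ≤ 0 ↔ p i) := by
  obtain ⟨S, hS, hAS⟩ := hA (filter_subset p A)
  obtain ⟨z, hz⟩ := h𝒜 S hS
  refine ⟨z, fun i hi => ?_⟩
  have hmem := Finset.ext_iff.1 hAS i
  simp only [mem_inter, mem_filter, hi, true_and] at hmem
  rw [hz, hmem]

lemma not_shatters_of_sum_mul_eq [CommRing R] [LinearOrder R] [IsStrictOrderedRing R]
    (h𝒜 : ∀ S ∈ 𝒜, ∃ z, ∀ i, f i z ≤ 0 ↔ i ∈ S) {g : ι → R} (hg : ∃ i ∈ A, g i ≠ 0)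
    (hconst : ∀ z w, ∑ i ∈ A, g i * f i z = ∑ i ∈ A, g i * f i w) : ¬ 𝒜.Shatters A := by
  intro hA
  obtain ⟨zP, hzP⟩ := exists_forall_le_zero_iff_of_shatters h𝒜 hA (0 < g ·)
  obtain ⟨zN, hzN⟩ := exists_forall_le_zero_iff_of_shatters h𝒜 hA (g · < 0)
  have hle : ∀ i ∈ A, g i * f i zP ≤ g i * f i zN := fun i hi => by
    by_cases hgi : g i = 0
    · simp [hgi]
    · exact (mul_lt_mul_of_le_zero_iff (hzP i hi) (hzN i hi) hgi).le
  obtain ⟨i₀, hi₀, hgi₀⟩ := hg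
  exact (sum_lt_sum hle ⟨i₀, hi₀, mul_lt_mul_of_le_zero_iff (hzP i₀ hi₀) (hzN i₀ hi₀) hgi₀⟩).ne
    (hconst zP zN)

end SublevelPatterns

section AffinePatterns

variable {𝕜 ι E : Type*} [Field 𝕜] [AddCommGroup E] [Module 𝕜 E] [FiniteDimensional 𝕜 E]
  {f : ι → E →ᵃ[𝕜] 𝕜}

lemma exists_sum_mul_affineMap_eq_const {A : Finset ι} (hA : Module.finrank 𝕜 E < #A) :
    ∃ g : ι → 𝕜, (∃ i ∈ A, g i ≠ 0) ∧ ∀ z w, ∑ i ∈ A, g i * f i z = ∑ i ∈ A, g i * f i w := by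
  have hdep : ¬ LinearIndepOn 𝕜 (fun i => (f i).linear) (A : Set ι) := fun h => by
    have := h.fintype_card_le_finrank
    simp only [SetLike.coe_sort_coe, Fintype.card_coe,
      Subspace.dual_finrank_eq] at this
    omega
  obtain ⟨g, hg0, hg⟩ := not_linearIndepOn_finset_iff.1 hdep
  refine ⟨g, hg, fun z w => ?_⟩
  have hlin : ∀ z, ∑ i ∈ A, g i * (f i).linear z = 0 := fun z => by
    simpa using congrArg (· z) hg0
  have hdecomp : ∀ i z, f i z = (f i).linear z + f i 0 := fun i z => by
    simpa using (f i).map_vadd 0 z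
  simp only [hdecomp _ z, hdecomp _ w, mul_add, sum_add_distrib, hlin, zero_add]

variable [LinearOrder 𝕜] [IsStrictOrderedRing 𝕜] [DecidableEq ι] {𝒜 : Finset (Finset ι)}

lemma vcDim_le_finrank_of_affineMap (h𝒜 : ∀ S ∈ 𝒜, ∃ z, ∀ i, f i z ≤ 0 ↔ i ∈ S) :
    𝒜.vcDim ≤ Module.finrank 𝕜 E := by
  refine Finset.sup_le fun A hA => not_lt.1 fun hcard => ?_
  obtain ⟨g, hg, hconst⟩ := exists_sum_mul_affineMap_eq_const (f := f) hcard
  exact not_shatters_of_sum_mul_eq (f := fun i z => f i z) h𝒜 hg hconst (mem_shatterer.1 hA)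

lemma card_le_sum_choose_of_affineMap [Fintype ι]
    (h𝒜 : ∀ S ∈ 𝒜, ∃ z, ∀ i, f i z ≤ 0 ↔ i ∈ S) :
    #𝒜 ≤ ∑ i ∈ range (Module.finrank 𝕜 E + 1), (Fintype.card ι).choose i :=
  calc #𝒜 ≤ #𝒜.shatterer := card_le_card_shatterer 𝒜
    _ ≤ ∑ i ∈ Iic 𝒜.vcDim, (Fintype.card ι).choose i := card_shatterer_le_sum_vcDim
    _ ≤ _ := sum_le_sum_of_subset fun i hi => by
        have := vcDim_le_finrank_of_affineMap h𝒜
        simp only [mem_Iic, mem_range] at hi ⊢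
        omega

end AffinePatterns

lemma filter_le_eq_of_card_eq {ι α : Type*} [LinearOrder α] (s : Finset ι) (u : ι → α) {a b : α}
    (h : #{i ∈ s | u i ≤ a} = #{i ∈ s | u i ≤ b}) : {i ∈ s | u i ≤ a} = {i ∈ s | u i ≤ b} := by
  wlog hab : a ≤ b generalizing a b
  · exact (this h.symm (le_of_not_ge hab)).symm
  refine eq_of_subset_of_card_le (fun i hi => ?_) h.ge
  simp only [mem_filter] at hi ⊢
  exact ⟨hi.1, hi.2.trans hab⟩

section L1Cells

variable {n : ℕ}

/-- The affine function `z ↦ ∑ⱼ ±(z j - a j)` that agrees with `‖z - a‖₁` on the cell of `c`. -/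
noncomputable def l1DistCellAffine (a c : Fin n → ℝ) : (Fin n → ℝ) →ᵃ[ℝ] ℝ where
  toFun z := ∑ j, (if a j ≤ c j then 1 else -1) * (z j - a j)
  linear := ∑ j, (if a j ≤ c j then (1 : ℝ) else -1) • LinearMap.proj j
  map_vadd' z v := by
    simp only [vadd_eq_add, Pi.add_apply]
    rw [LinearMap.sum_apply, ← sum_add_distrib]
    refine sum_congr rfl fun j _ => ?_
    simp only [LinearMap.smul_apply, LinearMap.proj_apply, smul_eq_mul]
    ring

lemma l1DistCellAffine_apply {a c z : Fin n → ℝ} (h : ∀ j, a j ≤ z j ↔ a j ≤ c j) :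
    l1DistCellAffine a c z = ∑ j, |z j - a j| := by
  show ∑ j, (if a j ≤ c j then 1 else -1) * (z j - a j) = _
  refine sum_congr rfl fun j _ => ?_
  by_cases hj : a j ≤ c j
  · rw [if_pos hj, one_mul, abs_of_nonneg (sub_nonneg.2 ((h j).2 hj))]
  · rw [if_neg hj, abs_of_neg (sub_neg.2 (not_le.1 (mt (h j).1 hj)))]
    ring

variable {ι : Type*} [Fintype ι]

noncomputable def rankSignature (x : ι → Fin n → ℝ) (y : Fin n → ℝ) :
    Fin n → Fin (Fintype.card ι + 1) :=
  fun j => ⟨#{i | x i j ≤ y j}, Nat.lt_succ_of_le (card_le_univ _)⟩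

lemma le_iff_le_of_rankSignature_eq {x : ι → Fin n → ℝ} {y y' : Fin n → ℝ}
    (h : rankSignature x y = rankSignature x y') (i : ι) (j : Fin n) :
    x i j ≤ y j ↔ x i j ≤ y' j := by
  have hfilter := filter_le_eq_of_card_eq univ (x · j) (congrArg Fin.val (congrFun h j))
  simpa using Finset.ext_iff.1 hfilter i

lemma card_filter_rankSignature_eq_le [DecidableEq ι] {x : ι → Fin n → ℝ} {r : ι → ℝ}
    {y : Finset ι → Fin n → ℝ} (hy : ∀ S i, ∑ j, |y S j - x i j| ≤ r i ↔ i ∈ S)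
    (σ : Fin n → Fin (Fintype.card ι + 1)) :
    #{S | rankSignature x (y S) = σ} ≤ ∑ i ∈ range (n + 1), (Fintype.card ι).choose i := by
  rcases eq_empty_or_nonempty {S | rankSignature x (y S) = σ} with hempty | ⟨S₀, hS₀⟩
  · simp [hempty]
  refine (card_le_sum_choose_of_affineMap
    (f := fun i => l1DistCellAffine (x i) (y S₀) - AffineMap.const ℝ _ (r i))
    fun S hS => ⟨y S, fun i => ?_⟩).trans_eq (by simp)
  have hcell :=
    le_iff_le_of_rankSignature_eq ((mem_filter.1 hS).2.trans (mem_filter.1 hS₀).2.symm)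
  simp [l1DistCellAffine_apply (hcell i), hy]

end L1Cells

/-- If `x^1, …, x^k ∈ ℝ^n` is ℓ1-pseudo-shattered, then
`2^k ≤ (k+1)^n · Σ_{i=0}^{n} C(k, i)`. -/
theorem l1_shattering_counting_bound
    {n k : ℕ} (x : Fin k → Fin n → ℝ)
    (hshatter : ∃ r : Fin k → ℝ, ∀ S : Finset (Fin k), ∃ y : Fin n → ℝ,
      ∀ i : Fin k, (∑ j, |y j - x i j| ≤ r i ↔ i ∈ S)) :
    2 ^ k ≤ (k + 1) ^ n * ∑ i ∈ Finset.range (n + 1), k.choose i := by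
  obtain ⟨r, hr⟩ := hshatter
  choose y hy using hr
  calc 2 ^ k = #(univ : Finset (Finset (Fin k))) := by simp
    _ ≤ (∑ i ∈ range (n + 1), k.choose i) *
          #(univ : Finset (Fin n → Fin (Fintype.card (Fin k) + 1))) :=
        card_le_mul_card_image_of_maps_to (f := fun S => rankSignature x (y S))
          (fun _ _ => mem_univ _) _ fun σ _ => by
            simpa using card_filter_rankSignature_eq_le hy σ
    _ = _ := by simp [mul_comm]
end

section
/- The pseudo-dimension of the class of ℓ1-distance functions {x ↦ ‖y − x‖₁ : y ∈ ℝ^n} on ℝ^n is O(n log n): there exists an absolute constant C > 0 such that for every n ≥ 1, any family x^1, …, x^k ∈ ℝ^n that is ℓ1-pseudo-shattered satisfies k ≤ C · n · log(n + 1). -/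
/-!
A shattered family realises all `2 ^ k` patterns, and we show that `ℓ¹` balls with fixed
centres and radii realise at most `(k + 1) ^ (2 n)` of them; `2 ^ k ≤ (k + 1) ^ (2 n)` then
forces `k = O(n log n)`.

In each coordinate `j`, the set of centres with `x i j ≤ y j` is one of at most `k + 1`
sublevel sets, and on each of the resulting `(k + 1) ^ n` cells every `‖y - x i‖₁ - r i` is
affine in `y`. Finally, `k` affine functions on `ℝ^n` have at most `(k + 1) ^ n` sign patterns:
a pattern of the first `k - 1` of them extends in both ways only if it is realised on the zero
hyperplane of the last one, a copy of `ℝ^(n - 1)`.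
-/

open Finset Matrix Real

section AffinePatterns

variable {k m n : ℕ}

def IsAffinePattern (a : Fin k → Fin n → ℝ) (b : Fin k → ℝ) (S : Finset (Fin k)) : Prop :=
  ∃ y : Fin n → ℝ, ∀ i, a i ⬝ᵥ y + b i ≤ 0 ↔ i ∈ S

open scoped Classical in
noncomputable def affinePatterns (a : Fin k → Fin n → ℝ) (b : Fin k → ℝ) :
    Finset (Finset (Fin k)) :=
  univ.filter (IsAffinePattern a b)

@[simp]
lemma mem_affinePatterns {a : Fin k → Fin n → ℝ} {b : Fin k → ℝ} {S : Finset (Fin k)} :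
    S ∈ affinePatterns a b ↔ IsAffinePattern a b S := by
  simp [affinePatterns]

noncomputable def dropLast (S : Finset (Fin (k + 1))) : Finset (Fin k) :=
  S.preimage Fin.castSucc (Fin.castSucc_injective k).injOn

@[simp]
lemma mem_dropLast {S : Finset (Fin (k + 1))} {i : Fin k} : i ∈ dropLast S ↔ i.castSucc ∈ S :=
  mem_preimage

lemma eq_of_dropLast_eq {S₁ S₂ : Finset (Fin (k + 1))} (h : dropLast S₁ = dropLast S₂)
    (hlast : Fin.last k ∈ S₁ ↔ Fin.last k ∈ S₂) : S₁ = S₂ := by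
  ext i
  induction i using Fin.lastCases with
  | last => exact hlast
  | cast i => simpa using congr(i ∈ $h)

lemma IsAffinePattern.dropLast {a : Fin (k + 1) → Fin n → ℝ} {b : Fin (k + 1) → ℝ}
    {S : Finset (Fin (k + 1))} (hS : IsAffinePattern a b S) :
    IsAffinePattern (fun i ↦ a i.castSucc) (fun i ↦ b i.castSucc) (dropLast S) := by
  obtain ⟨y, hy⟩ := hS
  exact ⟨y, fun i ↦ by simpa using hy i.castSucc⟩

lemma convex_comb_nonpos_iff {p q θ : ℝ} (hθ₀ : 0 ≤ θ) (hθ₁ : θ < 1) (hpq : p ≤ 0 ↔ q ≤ 0) :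
    (1 - θ) * p + θ * q ≤ 0 ↔ p ≤ 0 := by
  by_cases hp : p ≤ 0
  · have hq := hpq.mp hp
    simp only [hp, iff_true]
    nlinarith
  · have hq : 0 < q := not_le.mp (mt hpq.mpr hp)
    simp only [hp, iff_false, not_le]
    nlinarith [not_le.mp hp]

lemma dotProduct_convex_comb_add (c y₁ y₂ : Fin n → ℝ) (d θ : ℝ) :
    c ⬝ᵥ ((1 - θ) • y₁ + θ • y₂) + d = (1 - θ) * (c ⬝ᵥ y₁ + d) + θ * (c ⬝ᵥ y₂ + d) := by
  simp only [dotProduct_add, dotProduct_smul, smul_eq_mul]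
  ring

/-- The segment between the two witnesses crosses the zero hyperplane of the last function. -/
lemma exists_mem_hyperplane {a : Fin (k + 1) → Fin n → ℝ} {b : Fin (k + 1) → ℝ}
    {S₁ S₂ : Finset (Fin (k + 1))} (h₁ : IsAffinePattern a b S₁) (h₂ : IsAffinePattern a b S₂)
    (hdrop : dropLast S₁ = dropLast S₂) (hlast₁ : Fin.last k ∈ S₁) (hlast₂ : Fin.last k ∉ S₂) :
    ∃ z, a (Fin.last k) ⬝ᵥ z + b (Fin.last k) = 0 ∧
      ∀ i : Fin k, a i.castSucc ⬝ᵥ z + b i.castSucc ≤ 0 ↔ i ∈ dropLast S₁ := by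
  obtain ⟨y₁, hy₁⟩ := h₁
  obtain ⟨y₂, hy₂⟩ := h₂
  set u := a (Fin.last k) ⬝ᵥ y₁ + b (Fin.last k)
  set v := a (Fin.last k) ⬝ᵥ y₂ + b (Fin.last k)
  have hu : u ≤ 0 := (hy₁ _).mpr hlast₁
  have hv : 0 < v := not_le.mp (mt (hy₂ _).mp hlast₂)
  set θ := u / (u - v)
  have hθ₀ : 0 ≤ θ := div_nonneg_of_nonpos hu (by linarith)
  have hθ₁ : θ < 1 := (div_lt_one_of_neg (by linarith)).mpr (by linarith)
  refine ⟨(1 - θ) • y₁ + θ • y₂, ?_, fun i ↦ ?_⟩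
  · rw [dotProduct_convex_comb_add]
    calc (1 - θ) * u + θ * v = u - θ * (u - v) := by ring
      _ = 0 := by rw [div_mul_cancel₀ _ (by linarith), sub_self]
  · have hsame : a i.castSucc ⬝ᵥ y₁ + b i.castSucc ≤ 0 ↔ a i.castSucc ⬝ᵥ y₂ + b i.castSucc ≤ 0 := by
      rw [hy₁, hy₂, ← mem_dropLast, hdrop, mem_dropLast]
    rw [dotProduct_convex_comb_add, convex_comb_nonpos_iff hθ₀ hθ₁ hsame, hy₁, mem_dropLast]

lemma dotProduct_comp_succAbove {R : Type*} [NonUnitalNonAssocSemiring R]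
    {u : Fin (m + 1) → R} {j : Fin (m + 1)} (hu : u j = 0) (z : Fin (m + 1) → R) :
    (u ∘ j.succAbove) ⬝ᵥ (z ∘ j.succAbove) = u ⬝ᵥ z := by
  simp [dotProduct, Fin.sum_univ_succAbove _ j, hu]

/-- The coordinate `j` is eliminated using the hyperplane equation `c ⬝ᵥ z + d = 0`. -/
lemma isAffinePattern_of_mem_hyperplane {a : Fin k → Fin (m + 1) → ℝ} {b : Fin k → ℝ}
    {c : Fin (m + 1) → ℝ} {d : ℝ} {j : Fin (m + 1)} (hc : c j ≠ 0) {z : Fin (m + 1) → ℝ}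
    (hz : c ⬝ᵥ z + d = 0) {T : Finset (Fin k)} (hT : ∀ i, a i ⬝ᵥ z + b i ≤ 0 ↔ i ∈ T) :
    IsAffinePattern (fun i ↦ (a i - (a i j / c j) • c) ∘ j.succAbove)
      (fun i ↦ b i - a i j / c j * d) T := by
  refine ⟨z ∘ j.succAbove, fun i ↦ ?_⟩
  have hj : (a i - (a i j / c j) • c) j = 0 := by simp [hc]
  rw [dotProduct_comp_succAbove hj, ← hT i]
  convert Iff.rfl using 2
  simp only [sub_dotProduct, smul_dotProduct, smul_eq_mul]
  linear_combination (a i j / c j) * hz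

lemma card_eq_card_union_add_card_inter_dropLast (P : Finset (Finset (Fin (k + 1)))) :
    #P = #((P.filter (Fin.last k ∈ ·)).image dropLast ∪
          (P.filter (Fin.last k ∉ ·)).image dropLast) +
      #((P.filter (Fin.last k ∈ ·)).image dropLast ∩
          (P.filter (Fin.last k ∉ ·)).image dropLast) := by
  rw [card_union_add_card_inter, card_image_of_injOn, card_image_of_injOn,
    card_filter_add_card_filter_not]
  · exact fun S₁ h₁ S₂ h₂ h ↦
      eq_of_dropLast_eq h (iff_of_false (mem_filter.mp h₁).2 (mem_filter.mp h₂).2)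
  · exact fun S₁ h₁ S₂ h₂ h ↦
      eq_of_dropLast_eq h (iff_of_true (mem_filter.mp h₁).2 (mem_filter.mp h₂).2)

lemma IsAffinePattern.last_ne_zero {a : Fin (k + 1) → Fin n → ℝ} {b : Fin (k + 1) → ℝ}
    {S₁ S₂ : Finset (Fin (k + 1))} (h₁ : IsAffinePattern a b S₁) (h₂ : IsAffinePattern a b S₂)
    (hlast₁ : Fin.last k ∈ S₁) (hlast₂ : Fin.last k ∉ S₂) : a (Fin.last k) ≠ 0 := by
  obtain ⟨y₁, hy₁⟩ := h₁
  obtain ⟨y₂, hy₂⟩ := h₂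
  intro h
  have e₁ := hy₁ (Fin.last k)
  have e₂ := hy₂ (Fin.last k)
  rw [h, zero_dotProduct, zero_add] at e₁ e₂
  exact hlast₂ (e₂.mp (e₁.mpr hlast₁))

theorem card_affinePatterns_le :
    ∀ {k n : ℕ} (a : Fin k → Fin n → ℝ) (b : Fin k → ℝ), #(affinePatterns a b) ≤ (k + 1) ^ n
  | 0, n, a, b => by simpa using card_le_univ (affinePatterns a b)
  | k + 1, n, a, b => by
    classical
    set P := affinePatterns a b
    set I := (P.filter (Fin.last k ∈ ·)).image dropLast
    set O := (P.filter (Fin.last k ∉ ·)).image dropLast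
    have hunion : #(I ∪ O) ≤ (k + 1) ^ n := by
      refine (card_le_card fun T hT ↦ ?_).trans
        (card_affinePatterns_le (fun i ↦ a i.castSucc) (fun i ↦ b i.castSucc))
      simp only [I, O, mem_union, mem_image, mem_filter] at hT
      rcases hT with ⟨S, ⟨hS, -⟩, rfl⟩ | ⟨S, ⟨hS, -⟩, rfl⟩ <;>
        exact mem_affinePatterns.mpr (mem_affinePatterns.mp hS).dropLast
    rw [card_eq_card_union_add_card_inter_dropLast P]
    rcases (I ∩ O).eq_empty_or_nonempty with hempty | ⟨T, hT⟩
    · rw [hempty, card_empty, add_zero]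
      exact hunion.trans (Nat.pow_le_pow_left (by omega) n)
    have hdoubled {T} (hT : T ∈ I ∩ O) : ∃ S₁ ∈ P, ∃ S₂ ∈ P, dropLast S₁ = T ∧
        dropLast S₂ = T ∧ Fin.last k ∈ S₁ ∧ Fin.last k ∉ S₂ := by
      simp only [I, O, mem_inter, mem_image, mem_filter] at hT
      obtain ⟨⟨S₁, ⟨h₁, hl₁⟩, hT₁⟩, ⟨S₂, ⟨h₂, hl₂⟩, hT₂⟩⟩ := hT
      exact ⟨S₁, h₁, S₂, h₂, hT₁, hT₂, hl₁, hl₂⟩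
    obtain ⟨S₁, h₁, S₂, h₂, -, -, hl₁, hl₂⟩ := hdoubled hT
    obtain ⟨j, hj⟩ := Function.ne_iff.mp
      ((mem_affinePatterns.mp h₁).last_ne_zero (mem_affinePatterns.mp h₂) hl₁ hl₂)
    obtain ⟨m, rfl⟩ := Nat.exists_eq_add_one_of_ne_zero j.pos.ne'
    have hinter : #(I ∩ O) ≤ (k + 1) ^ m := by
      refine (card_le_card fun T hT ↦ ?_).trans (card_affinePatterns_le
        (fun i ↦
          (a i.castSucc - (a i.castSucc j / a (Fin.last k) j) • a (Fin.last k)) ∘ j.succAbove)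
        (fun i ↦ b i.castSucc - a i.castSucc j / a (Fin.last k) j * b (Fin.last k)))
      obtain ⟨S₁, h₁, S₂, h₂, rfl, hdrop, hl₁, hl₂⟩ := hdoubled hT
      obtain ⟨z, hz, hzT⟩ := exists_mem_hyperplane (mem_affinePatterns.mp h₁)
        (mem_affinePatterns.mp h₂) hdrop.symm hl₁ hl₂
      exact mem_affinePatterns.mpr (isAffinePattern_of_mem_hyperplane hj hz hzT)
    calc #(I ∪ O) + #(I ∩ O) ≤ (k + 1) ^ (m + 1) + (k + 1) ^ m := add_le_add hunion hinter
      _ = (k + 1) ^ m * (k + 2) := by ring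
      _ ≤ (k + 2) ^ m * (k + 2) := by gcongr; omega
      _ = (k + 1 + 1) ^ (m + 1) := by rw [pow_succ]

end AffinePatterns

section L1

variable {ι α : Type*} [Fintype ι] [LinearOrder α]

open scoped Classical in
noncomputable def sublevelSets (x : ι → α) : Finset (Finset ι) :=
  univ.filter fun T ↦ ∃ c, ∀ i, x i ≤ c ↔ i ∈ T

@[simp]
lemma mem_sublevelSets {x : ι → α} {T : Finset ι} :
    T ∈ sublevelSets x ↔ ∃ c, ∀ i, x i ≤ c ↔ i ∈ T := by
  simp [sublevelSets]

/-- Sublevel sets form a chain, so they are determined by their cardinality. -/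
lemma card_sublevelSets_le (x : ι → α) : #(sublevelSets x) ≤ Fintype.card ι + 1 := by
  classical
  have hinj : Set.InjOn card (sublevelSets x : Set (Finset ι)) := by
    intro T₁ h₁ T₂ h₂ hcard
    obtain ⟨c₁, hc₁⟩ := mem_sublevelSets.mp h₁
    obtain ⟨c₂, hc₂⟩ := mem_sublevelSets.mp h₂
    rcases le_total c₁ c₂ with hc | hc
    · exact eq_of_subset_of_card_le (fun i hi ↦ (hc₂ i).mp (((hc₁ i).mpr hi).trans hc)) hcard.ge
    · exact (eq_of_subset_of_card_le (fun i hi ↦ (hc₁ i).mp (((hc₂ i).mpr hi).trans hc))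
        hcard.le).symm
  simpa using card_le_card_of_injOn card (fun T _ ↦ mem_range.mpr (Nat.lt_succ_of_le
    (card_le_univ T))) hinj

variable {k n : ℕ}

open scoped Classical in
noncomputable def l1BallPatterns (x : Fin k → Fin n → ℝ) (r : Fin k → ℝ) :
    Finset (Finset (Fin k)) :=
  univ.filter fun S ↦ ∃ y : Fin n → ℝ, ∀ i, ∑ j, |y j - x i j| ≤ r i ↔ i ∈ S

@[simp]
lemma mem_l1BallPatterns {x : Fin k → Fin n → ℝ} {r : Fin k → ℝ} {S : Finset (Fin k)} :
    S ∈ l1BallPatterns x r ↔ ∃ y : Fin n → ℝ, ∀ i, ∑ j, |y j - x i j| ≤ r i ↔ i ∈ S := by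
  simp [l1BallPatterns]

def signsOf (t : Fin n → Finset (Fin k)) (i : Fin k) (j : Fin n) : ℝ :=
  if i ∈ t j then 1 else -1

lemma sum_abs_sub_eq_signsOf_dotProduct (x : Fin k → Fin n → ℝ) (y : Fin n → ℝ) (i : Fin k) :
    ∑ j, |y j - x i j| = signsOf (fun j ↦ univ.filter (x · j ≤ y j)) i ⬝ᵥ (y - x i) := by
  refine sum_congr rfl fun j _ ↦ ?_
  by_cases h : x i j ≤ y j
  · simp [signsOf, h, abs_of_nonneg (sub_nonneg.mpr h)]
  · simp [signsOf, h, abs_of_neg (sub_neg.mpr (not_le.mp h))]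

lemma l1BallPatterns_subset (x : Fin k → Fin n → ℝ) (r : Fin k → ℝ) :
    l1BallPatterns x r ⊆ (Fintype.piFinset fun j ↦ sublevelSets (x · j)).biUnion fun t ↦
      affinePatterns (signsOf t) fun i ↦ -(signsOf t i ⬝ᵥ x i) - r i := by
  intro S hS
  obtain ⟨y, hy⟩ := mem_l1BallPatterns.mp hS
  refine mem_biUnion.mpr ⟨fun j ↦ univ.filter (x · j ≤ y j), ?_, ?_⟩
  · exact Fintype.mem_piFinset.mpr fun j ↦ mem_sublevelSets.mpr ⟨y j, by simp⟩
  · refine mem_affinePatterns.mpr ⟨y, fun i ↦ ?_⟩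
    rw [← hy i, sum_abs_sub_eq_signsOf_dotProduct, dotProduct_sub]
    constructor <;> intro h <;> linarith

theorem card_l1BallPatterns_le (x : Fin k → Fin n → ℝ) (r : Fin k → ℝ) :
    #(l1BallPatterns x r) ≤ (k + 1) ^ (2 * n) := by
  calc #(l1BallPatterns x r)
      ≤ ∑ t ∈ Fintype.piFinset fun j ↦ sublevelSets (x · j),
          #(affinePatterns (signsOf t) fun i ↦ -(signsOf t i ⬝ᵥ x i) - r i) :=
        (card_le_card (l1BallPatterns_subset x r)).trans card_biUnion_le
    _ ≤ ∑ t ∈ Fintype.piFinset fun j ↦ sublevelSets (x · j), (k + 1) ^ n :=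
        sum_le_sum fun t _ ↦ card_affinePatterns_le _ _
    _ ≤ (k + 1) ^ n * (k + 1) ^ n := by
        rw [sum_const, smul_eq_mul, Fintype.card_piFinset]
        gcongr
        calc ∏ j, #(sublevelSets (x · j)) ≤ ∏ _j : Fin n, (k + 1) :=
              prod_le_prod' fun j _ ↦ by simpa using card_sublevelSets_le (x · j)
          _ = (k + 1) ^ n := by simp
    _ = (k + 1) ^ (2 * n) := by ring

end L1

theorem le_mul_log_of_two_pow_le {n k : ℕ} (hn : 1 ≤ n) (h : 2 ^ k ≤ (k + 1) ^ (2 * n)) :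
    (k : ℝ) ≤ 20 * n * log (n + 1) := by
  have hn' : (1 : ℝ) ≤ n := by exact_mod_cast hn
  have hcount : k * log 2 ≤ 2 * n * log (k + 1) := by
    have h' : (2 : ℝ) ^ k ≤ ((k : ℝ) + 1) ^ (2 * n) := by exact_mod_cast h
    simpa [Real.log_pow] using Real.log_le_log (by positivity) h'
  have htangent : log (k + 1) ≤ log (8 * n) + (k + 1) / (8 * n) - 1 := by
    have := Real.log_le_sub_one_of_pos (x := (k + 1) / (8 * n)) (by positivity)
    rw [Real.log_div (by positivity) (by positivity)] at this
    linarith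
  have hlog8n : log (8 * n) ≤ 4 * log (n + 1) := by
    have hlog2 : log 2 ≤ log (n + 1) := Real.log_le_log (by norm_num) (by linarith)
    have hlogn : log n ≤ log (n + 1) := Real.log_le_log (by positivity) (by linarith)
    rw [Real.log_mul (by norm_num) (by positivity), show (8 : ℝ) = 2 ^ 3 by norm_num,
      Real.log_pow]
    push_cast
    linarith
  have hbound : 2 * n * log (k + 1) ≤ 8 * n * log (n + 1) + (k + 1) / 4 - 2 * n :=
    calc 2 * n * log (k + 1) ≤ 2 * n * (4 * log (n + 1) + (k + 1) / (8 * n) - 1) := by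
          gcongr
          linarith
      _ = 8 * n * log (n + 1) + (k + 1) / 4 - 2 * n := by
          field_simp
          ring
  have hlog2 : 0.69 * (k : ℝ) ≤ k * log 2 := by
    have := Real.log_two_gt_d9
    nlinarith [(Nat.cast_nonneg k : (0 : ℝ) ≤ k)]
  have hnL : 0 ≤ n * log (n + 1) := mul_nonneg (by positivity) (Real.log_nonneg (by linarith))
  linarith

/-- The pseudo-dimension of the class of ℓ1-distance functions
`{x ↦ ‖y − x‖₁ : y ∈ ℝ^n}` is `O(n log n)`: there is an absolute constant
`C > 0` such that any ℓ1-pseudo-shattered family in `ℝ^n` (for `n ≥ 1`)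
has size at most `C · n · log(n + 1)`. -/
theorem l1_pseudodimension_O_n_log_n :
    ∃ C : ℝ, 0 < C ∧ ∀ n : ℕ, 1 ≤ n → ∀ k : ℕ, ∀ x : Fin k → Fin n → ℝ,
      (∃ r : Fin k → ℝ, ∀ S : Finset (Fin k), ∃ y : Fin n → ℝ,
        ∀ i : Fin k, (∑ j, |y j - x i j| ≤ r i ↔ i ∈ S)) →
      (k : ℝ) ≤ C * n * Real.log (n + 1) := by
  refine ⟨20, by norm_num, fun n hn k x ⟨r, hshatter⟩ ↦ le_mul_log_of_two_pow_le hn ?_⟩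
  have hall : l1BallPatterns x r = univ :=
    eq_univ_of_forall fun S ↦ mem_l1BallPatterns.mpr (hshatter S)
  calc 2 ^ k = #(univ : Finset (Finset (Fin k))) := by simp
    _ = #(l1BallPatterns x r) := by rw [hall]
    _ ≤ (k + 1) ^ (2 * n) := card_l1BallPatterns_le x r
end

section
/- Define the rounding function ρ : ℝ → ℝ by ρ(t) = ⌊2t⌋ if t ≥ 1/2 and ρ(t) = 0 if 0 ≤ t < 1/2. Let δ_i, δ_j ≥ 0 be reals and let r be an integer with δ_i + δ_j ≥ r. Then ρ(δ_i) + ρ(δ_j) ≥ r. Moreover ρ(t) ≤ 2t for all t ≥ 0, so this integral rounding at most doubles any nonnegatively weighted sum: for any weights w_i ≥ 0, Σ_i w_i ρ(δ_i) ≤ 2 Σ_i w_i δ_i. -/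
/-! `ρ(t)` is a nonnegative integer exceeding `2t - 1`. For a covering constraint
`r ≤ δᵢ + δⱼ` this gives `ρ(δᵢ) + ρ(δⱼ) > 2r - 2`, hence `ρ(δᵢ) + ρ(δⱼ) ≥ 2r - 1` by integrality,
which is at least `r` once `r ≥ 1`; for `r ≤ 0` nonnegativity suffices. -/

/-- The rounding `ρ(t) = ⌊2t⌋` for `t ≥ 1/2` and `ρ(t) = 0` for `0 ≤ t < 1/2`. -/
noncomputable def roundCover (t : ℝ) : ℝ := if 1 / 2 ≤ t then (⌊2 * t⌋ : ℝ) else 0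

noncomputable def roundCoverInt (t : ℝ) : ℤ := if 1 / 2 ≤ t then ⌊2 * t⌋ else 0

theorem intCast_roundCoverInt (t : ℝ) : (roundCoverInt t : ℝ) = roundCover t := by
  unfold roundCoverInt roundCover
  split_ifs <;> simp

theorem roundCoverInt_nonneg (t : ℝ) : 0 ≤ roundCoverInt t := by
  unfold roundCoverInt
  split_ifs with h
  · exact Int.floor_nonneg.mpr (by linarith)
  · exact le_rfl

theorem two_mul_sub_one_lt_roundCoverInt (t : ℝ) : 2 * t - 1 < roundCoverInt t := by
  unfold roundCoverInt
  split_ifs with h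
  · exact Int.sub_one_lt_floor _
  · push_cast; linarith

theorem roundCover_le_two_mul {t : ℝ} (ht : 0 ≤ t) : roundCover t ≤ 2 * t := by
  unfold roundCover
  split_ifs
  · exact Int.floor_le _
  · linarith

theorem intCast_le_roundCover_add_roundCover {x y : ℝ} {r : ℤ} (h : (r : ℝ) ≤ x + y) :
    (r : ℝ) ≤ roundCover x + roundCover y := by
  rw [← intCast_roundCoverInt, ← intCast_roundCoverInt]
  have hlt : ((2 * r - 2 : ℤ) : ℝ) < (roundCoverInt x + roundCoverInt y : ℤ) := by
    push_cast
    linarith [two_mul_sub_one_lt_roundCoverInt x, two_mul_sub_one_lt_roundCoverInt y]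
  have hlt' : 2 * r - 2 < roundCoverInt x + roundCoverInt y := by exact_mod_cast hlt
  have hle : r ≤ roundCoverInt x + roundCoverInt y := by
    linarith [roundCoverInt_nonneg x, roundCoverInt_nonneg y]
  exact_mod_cast hle

theorem sum_mul_roundCover_le {ι : Type*} (s : Finset ι) {w δ : ι → ℝ}
    (hw : ∀ i ∈ s, 0 ≤ w i) (hδ : ∀ i ∈ s, 0 ≤ δ i) :
    ∑ i ∈ s, w i * roundCover (δ i) ≤ 2 * ∑ i ∈ s, w i * δ i := by
  rw [Finset.mul_sum]
  refine Finset.sum_le_sum fun i hi => ?_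
  calc w i * roundCover (δ i) ≤ w i * (2 * δ i) :=
        mul_le_mul_of_nonneg_left (roundCover_le_two_mul (hδ i hi)) (hw i hi)
    _ = 2 * (w i * δ i) := by ring

theorem roundCover_properties_general
    {ι : Type*} [Fintype ι]
    (δi δj : ℝ)
    (r : ℤ) (hcov : (r : ℝ) ≤ δi + δj) :
    ((r : ℝ) ≤ roundCover δi + roundCover δj) ∧
    (∀ t : ℝ, 0 ≤ t → roundCover t ≤ 2 * t) ∧
    (∀ w δ : ι → ℝ, (∀ i, 0 ≤ w i) → (∀ i, 0 ≤ δ i) →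
      ∑ i, w i * roundCover (δ i) ≤ 2 * ∑ i, w i * δ i) :=
  ⟨intCast_le_roundCover_add_roundCover hcov, fun _ => roundCover_le_two_mul,
    fun _ _ hw hδ => sum_mul_roundCover_le _ (fun i _ => hw i) (fun i _ => hδ i)⟩

/-- The rounding `ρ` preserves covering constraints with integer right-hand
sides and at most doubles any nonnegatively weighted sum. -/
theorem roundCover_properties
    {ι : Type*} [Fintype ι]
    (δi δj : ℝ) (hδi : 0 ≤ δi) (hδj : 0 ≤ δj)
    (r : ℤ) (hcov : (r : ℝ) ≤ δi + δj) :
    ((r : ℝ) ≤ roundCover δi + roundCover δj) ∧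
    (∀ t : ℝ, 0 ≤ t → roundCover t ≤ 2 * t) ∧
    (∀ w δ : ι → ℝ, (∀ i, 0 ≤ w i) → (∀ i, 0 ≤ δ i) →
      ∑ i, w i * roundCover (δ i) ≤ 2 * ∑ i, w i * δ i) :=
  roundCover_properties_general δi δj r hcov
end

section
/- Let (L, R, E) be a finite bipartite graph and let b assign a natural number b_v to every vertex v ∈ L ∪ R. If there is no function x : E → ℕ with Σ_{e ∈ N(i)} x(e) = b_i for every i ∈ L and Σ_{e ∈ N(j)} x(e) ≤ b_j for every j ∈ R (i.e. no integral b-matching saturating the demands on L while respecting the capacities on R), then there exists a set S ⊆ L with Σ_{i ∈ S} b_i > Σ_{j ∈ Γ(S)} b_j, where Γ(S) = {j ∈ R : ∃ i ∈ S, (i,j) ∈ E}. -/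
/-!
Replace every `i ∈ L` by `bL i` copies and every `j ∈ R` by `bR j` copies, a copy of `i` being
adjacent to a copy of `j` when `(i, j) ∈ E`. A set of copies on the left has at least as many
neighbours as elements as soon as its projection `S ⊆ L` satisfies
`Σ_{i∈S} b_i ≤ Σ_{j∈Γ(S)} b_j`, so if no `S` violates this, Hall's marriage theorem matches all
left copies injectively; the number of copies of `i` matched to copies of `j` is then a
`b`-matching.
-/

open Finset Function

section Copies

variable {α : Type*} [DecidableEq α] (b : α → ℕ)

theorem card_filter_sigma_fst_eq [Fintype α] (a : α) :
    #{p : Σ a, Fin (b a) | p.1 = a} = b a := by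
  have hfiber : ({p : Σ a, Fin (b a) | p.1 = a} : Finset _) = ({a} : Finset α).sigma fun _ => univ := by
    ext ⟨a', k⟩; simp
  simp [hfiber]

theorem card_le_sum_image_sigma_fst (s : Finset (Σ a, Fin (b a))) :
    #s ≤ ∑ a ∈ s.image Sigma.fst, b a := by
  calc #s ≤ #((s.image Sigma.fst).sigma fun a => (univ : Finset (Fin (b a)))) :=
        card_le_card fun p hp => mem_sigma.2 ⟨mem_image_of_mem _ hp, mem_univ _⟩
    _ = ∑ a ∈ s.image Sigma.fst, b a := by simp

end Copies

section BMatching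

variable {L R : Type*} [Fintype L] [Fintype R] [DecidableEq L] [DecidableEq R]

def IsBMatching (E : Finset (L × R)) (bL : L → ℕ) (bR : R → ℕ) (x : L × R → ℕ) : Prop :=
  (∀ e, e ∉ E → x e = 0) ∧ (∀ i, ∑ j, x (i, j) = bL i) ∧ (∀ j, ∑ i, x (i, j) ≤ bR j)

def neighborFinset (E : Finset (L × R)) (S : Finset L) : Finset R :=
  {j | ∃ i ∈ S, (i, j) ∈ E}

variable (E : Finset (L × R)) {bL : L → ℕ} {bR : R → ℕ}

theorem exists_injective_copies_of_forall_le
    (hS : ∀ S : Finset L, ∑ i ∈ S, bL i ≤ ∑ j ∈ neighborFinset E S, bR j) :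
    ∃ f : (Σ i, Fin (bL i)) → Σ j, Fin (bR j), Injective f ∧ ∀ p, (p.1, (f p).1) ∈ E := by
  let t : (Σ i, Fin (bL i)) → Finset (Σ j, Fin (bR j)) := fun p => {q | (p.1, q.1) ∈ E}
  have hall (s : Finset (Σ i, Fin (bL i))) : #s ≤ #(s.biUnion t) := by
    have hbiUnion : s.biUnion t = (neighborFinset E (s.image Sigma.fst)).sigma fun _ => univ := by
      ext q
      simp [t, neighborFinset]
    calc #s ≤ ∑ i ∈ s.image Sigma.fst, bL i := card_le_sum_image_sigma_fst bL s
      _ ≤ ∑ j ∈ neighborFinset E (s.image Sigma.fst), bR j := hS _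
      _ = #(s.biUnion t) := by simp [hbiUnion]
  obtain ⟨f, hf, hfE⟩ := (all_card_le_biUnion_card_iff_exists_injective t).1 hall
  exact ⟨f, hf, fun p => by simpa [t] using hfE p⟩

theorem isBMatching_of_injective {f : (Σ i, Fin (bL i)) → Σ j, Fin (bR j)} (hf : Injective f)
    (hfE : ∀ p, (p.1, (f p).1) ∈ E) :
    IsBMatching E bL bR fun e => #{p | p.1 = e.1 ∧ (f p).1 = e.2} := by
  refine ⟨?_, fun i => ?_, fun j => ?_⟩
  · rintro ⟨i, j⟩ hij
    simp only [card_eq_zero, filter_eq_empty_iff, not_and]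
    rintro p - rfl rfl
    exact hij (hfE p)
  · rw [← card_filter_sigma_fst_eq bL i, card_eq_sum_card_fiberwise fun p _ => mem_univ (f p).1]
    simp only [filter_filter]
  · calc ∑ i, #{p | p.1 = i ∧ (f p).1 = j}
        = #{p | (f p).1 = j} := by
          rw [card_eq_sum_card_fiberwise fun p _ => mem_univ p.1]
          simp only [filter_filter, and_comm]
      _ ≤ #{q : Σ j, Fin (bR j) | q.1 = j} :=
          card_le_card_of_injOn f (fun p hp => by simpa using hp) hf.injOn
      _ = bR j := card_filter_sigma_fst_eq bR j

end BMatching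

/-- Generalized Hall condition for `b`-matchings: if there is no integral
`b`-matching saturating the demands on `L` while respecting the capacities on
`R`, then some `S ⊆ L` has `Σ_{i∈S} b_i > Σ_{j∈Γ(S)} b_j`. -/
theorem b_matching_hall_violator
    {L R : Type*} [Fintype L] [Fintype R] [DecidableEq L] [DecidableEq R]
    (E : Finset (L × R)) (bL : L → ℕ) (bR : R → ℕ)
    (h : ¬ ∃ x : L × R → ℕ,
      (∀ e, e ∉ E → x e = 0) ∧
      (∀ i : L, ∑ j, x (i, j) = bL i) ∧
      (∀ j : R, ∑ i, x (i, j) ≤ bR j)) :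
    ∃ S : Finset L,
      ∑ j ∈ Finset.univ.filter (fun j : R => ∃ i ∈ S, (i, j) ∈ E), bR j <
        ∑ i ∈ S, bL i := by
  by_contra! hS
  obtain ⟨f, hf, hfE⟩ := exists_injective_copies_of_forall_le E hS
  exact h ⟨_, isBMatching_of_injective E hf hfE⟩
end
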